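/- If R is a commutative ring and 𝔭, 𝔮 are distinct prime ideals of R, then the tensor product of residue fields k(𝔭) ⊗_R k(𝔮) is zero, where k(𝔭) denotes the field of fractions of R/𝔭. -/

import Mathlib

/-!
An element `x ∈ 𝔭 \ 𝔮` maps to `0` in `k(𝔭)` and to a unit in `k(𝔮)`. In the ring
`k(𝔭) ⊗_R k(𝔮)` the image of `x` is therefore both `0` and a unit, so the ring is zero.
-/

open TensorProduct

theorem TensorProduct.subsingleton_of_algebraMap_eq_zero_of_isUnit {R A B : Type*} [CommRing R]
    [CommRing A] [CommRing B] [Algebra R A] [Algebra R B] {x : R}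
    (hA : algebraMap R A x = 0) (hB : IsUnit (algebraMap R B x)) : Subsingleton (A ⊗[R] B) := by
  have hunit : IsUnit (algebraMap R (A ⊗[R] B) x) := by
    rw [← Algebra.TensorProduct.includeRight.commutes x]
    exact hB.map _
  rw [← Algebra.TensorProduct.includeLeft.commutes x, hA, map_zero, isUnit_zero_iff] at hunit
  exact subsingleton_of_zero_eq_one hunit

theorem algebraMap_fractionRing_quotient_eq_zero_iff {R : Type*} [CommRing R] (p : Ideal R)
    [p.IsPrime] {x : R} : algebraMap R (FractionRing (R ⧸ p)) x = 0 ↔ x ∈ p := by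
  rw [IsScalarTower.algebraMap_apply R (R ⧸ p), IsFractionRing.to_map_eq_zero_iff,
    Ideal.Quotient.algebraMap_eq, Ideal.Quotient.eq_zero_iff_mem]

theorem subsingleton_fractionRing_quotient_tensor_of_not_le {R : Type*} [CommRing R]
    {p q : Ideal R} [p.IsPrime] [q.IsPrime] (hpq : ¬p ≤ q) :
    Subsingleton (FractionRing (R ⧸ p) ⊗[R] FractionRing (R ⧸ q)) := by
  obtain ⟨x, hxp, hxq⟩ := SetLike.not_le_iff_exists.1 hpq
  exact subsingleton_of_algebraMap_eq_zero_of_isUnit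
    ((algebraMap_fractionRing_quotient_eq_zero_iff p).2 hxp)
    (isUnit_iff_ne_zero.2 (mt (algebraMap_fractionRing_quotient_eq_zero_iff q).1 hxq))

theorem stmt_14 {R : Type*} [CommRing R] (p q : Ideal R)
    [p.IsPrime] [q.IsPrime] (h : p ≠ q) :
    Subsingleton (FractionRing (R ⧸ p) ⊗[R] FractionRing (R ⧸ q)) := by
  by_cases hpq : p ≤ q
  · have hqp : ¬q ≤ p := fun hqp => h (le_antisymm hpq hqp)
    have := subsingleton_fractionRing_quotient_tensor_of_not_le hqp
    exact (TensorProduct.comm R _ _).toEquiv.subsingleton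
  · exact subsingleton_fractionRing_quotient_tensor_of_not_le hpq
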